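/- For every nonnegative integer n, the Cauchy-Carlitz number satisfies CC_n = Σ_{j ≥ 0, r^j − 1 ≤ n} Σ_{l=0}^{r^j − 1} ((−1)^j / Π(r^j − 1)) · S1_C(n, r^j − 1) · S1_C(r^j − 1, l) · BC_l, where S1_C denotes the Stirling-Carlitz numbers of the first kind and BC_l the Bernoulli-Carlitz numbers (the outer sum is finite since S1_C(n, m) = 0 whenever n < m). -/

import Mathlib

/-!
Because `log_C` has no constant term it can be substituted into power series, and everything
follows from `e_C (log_C z) = z`. Substituting `log_C` into `(z / e_C z) · (e_C z / z) = 1`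
gives `B (log_C z) = log_C z / z` for `B = z / e_C z`, and also
`z / log_C z = (e_C z / z) ∘ log_C = ∑ⱼ log_C(z) ^ (r ^ j - 1) / D_j`. Reading off the coefficient
of `z ^ (r ^ j - 1)` in the first identity gives
`∑ₗ S1_C(r ^ j - 1, l) BC_l = Π(r ^ j - 1) (-1) ^ j / L_j`, and since `D_j = Π(r ^ j - 1) L_j`
the second identity is then the double sum.

As for `e_C (log_C z) = z`: in characteristic `p`, `log_C(z) ^ (r ^ i)` is `log_C` with its
coefficients raised to the power `r ^ i` and `z` replaced by `z ^ (r ^ i)`. So the coefficient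
of `z ^ (r ^ m)` is `∑_{i + k = m} ((-1) ^ k / L_k) ^ (r ^ i) / D_i`, which vanishes for `m ≥ 1`
by a recursion in `m` that comes from `[i + k] = [i] + [k] ^ (r ^ i)`.
-/

open scoped Classical
open PowerSeries Finset

noncomputable section

variable (F : Type) [Field F] [Fintype F]

/-- The rational function field `K = 𝔽_r(T)`. -/
abbrev K : Type := RatFunc F

/-- `r`, the cardinality of the finite field of constants. -/
def rr : ℕ := Fintype.card F

/-- The variable `T` of the rational function field. -/
def Tv : K F := RatFunc.X

/-- `[i] = T^{r^i} - T`. -/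
def br (i : ℕ) : K F := Tv F ^ (rr F) ^ i - Tv F

/-- `D_0 = 1`, `D_i = [i] · D_{i-1}^r`. -/
def D : ℕ → K F
  | 0 => 1
  | i + 1 => br F (i + 1) * D i ^ rr F

/-- `L_0 = 1`, `L_i = [i] · L_{i-1}`. -/
def L : ℕ → K F
  | 0 => 1
  | i + 1 => br F (i + 1) * L i

/-- The Carlitz factorial `Π(n) = ∏_j D_j^{c_j}`, where `c_j = n / r^j % r` are the
base-`r` digits of `n` (all digits with index `> n` vanish since `r ≥ 2`). -/
def Cf (n : ℕ) : K F := ∏ j ∈ Finset.range (n + 1), D F j ^ (n / (rr F) ^ j % rr F)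

/-- The Carlitz logarithm `log_C(z) = Σ_{i ≥ 0} (-1)^i z^{r^i} / L_i`: the coefficient of
`z^m` is `(-1)^i / L_i` if `m = r^i` and `0` otherwise (note `i ≤ r^i = m` since `r ≥ 2`). -/
def logC : PowerSeries (K F) :=
  PowerSeries.mk fun m =>
    ∑ i ∈ Finset.range (m + 1), if m = (rr F) ^ i then (-1 : K F) ^ i / L F i else 0

/-- The Carlitz exponential `e_C(z) = Σ_{i ≥ 0} z^{r^i} / D_i`. -/
def eC : PowerSeries (K F) :=
  PowerSeries.mk fun m =>
    ∑ i ∈ Finset.range (m + 1), if m = (rr F) ^ i then 1 / D F i else 0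

/-- The power series `log_C(z)/z`. -/
def logCdivZ : PowerSeries (K F) :=
  PowerSeries.mk fun n => PowerSeries.coeff (R := K F) (n + 1) (logC F)

/-- The power series `e_C(z)/z`. -/
def eCdivZ : PowerSeries (K F) :=
  PowerSeries.mk fun n => PowerSeries.coeff (R := K F) (n + 1) (eC F)

theorem Nat.pow_sub_one_div_pow_mod {b : ℕ} (hb : 0 < b) (j t : ℕ) :
    (b ^ j - 1) / b ^ t % b = if t < j then b - 1 else 0 := by
  split_ifs with htj
  · obtain ⟨s, rfl⟩ := Nat.exists_eq_add_of_lt htj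
    have hdiv : (b ^ (t + s + 1) - 1) / b ^ t = b * (b ^ s - 1) + (b - 1) := by
      have := Nat.mul_sub_div 0 (b ^ t) (b ^ (s + 1)) (Nat.mul_pos (pow_pos hb t) (pow_pos hb _))
      rw [← pow_add, ← add_assoc, Nat.zero_div] at this
      rw [this, Nat.mul_sub_one, pow_succ',
        ← Nat.sub_add_comm (Nat.le_mul_of_pos_right b (pow_pos hb s))]
      omega
    rw [hdiv, Nat.mul_add_mod, Nat.mod_eq_of_lt (by omega)]
  · rw [Nat.div_eq_of_lt, Nat.zero_mod]
    exact (Nat.sub_lt (pow_pos hb j) one_pos).trans_le (Nat.pow_le_pow_right hb (not_lt.1 htj))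

namespace PowerSeries

variable {R : Type*} [CommRing R]

theorem coeff_pow_expChar_pow (p : ℕ) [ExpChar R p] (f : R⟦X⟧) (k n : ℕ) :
    coeff n (f ^ p ^ k) = if p ^ k ∣ n then coeff (n / p ^ k) f ^ p ^ k else 0 := by
  rw [← MvPowerSeries.map_iterateFrobenius_expand p (expChar_ne_zero R p) f k]
  change coeff n (map (iterateFrobenius R p k) (expand (p ^ k) _ f)) = _
  rw [coeff_map, coeff_expand]
  split_ifs
  · exact iterateFrobenius_def p k _
  · exact zero_pow (pow_ne_zero k (expChar_ne_zero R p))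

theorem coeff_pow_eq_zero_of_lt {a : R⟦X⟧} (ha : constantCoeff a = 0) {n d : ℕ} (h : n < d) :
    coeff n (a ^ d) = 0 :=
  coeff_of_lt_order n ((Nat.cast_lt.2 h).trans_le (le_order_pow_of_constantCoeff_eq_zero d ha))

theorem coeff_subst_eq_sum_range {a : R⟦X⟧} (ha : constantCoeff a = 0) (f : R⟦X⟧) (n : ℕ) :
    coeff n (f.subst a) = ∑ d ∈ range (n + 1), coeff d f * coeff n (a ^ d) := by
  rw [coeff_subst' (HasSubst.of_constantCoeff_zero' ha)]
  refine finsum_eq_sum_of_support_subset _ fun d hd => ?_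
  by_contra hdn
  rw [coe_range, Set.mem_Iio, not_lt] at hdn
  exact hd (by simp only [smul_eq_mul, coeff_pow_eq_zero_of_lt ha (by omega : n < d), mul_zero])

theorem X_mul_shift_of_constantCoeff_eq_zero {φ : R⟦X⟧} (hφ : constantCoeff φ = 0) :
    (X * mk fun n => coeff (n + 1) φ) = φ := by
  conv_rhs => rw [eq_X_mul_shift_add_const φ, hφ, map_zero, add_zero]

end PowerSeries

lemma one_lt_rr : 1 < rr F := Fintype.one_lt_card

lemma rr_pos : 0 < rr F := Fintype.card_pos

lemma exists_ringHom_eq_pow_rr_pow (i : ℕ) : ∃ φ : K F →+* K F, ∀ x, φ x = x ^ rr F ^ i := by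
  obtain ⟨p, _, e, hp, he⟩ := FiniteField.card' F
  have : ExpChar F p := ExpChar.prime hp
  exact ⟨iterateFrobenius (K F) p (e * i), fun x => by rw [iterateFrobenius_def, rr, he, pow_mul]⟩

lemma coeff_pow_rr_pow (f : (K F)⟦X⟧) (i n : ℕ) :
    coeff n (f ^ rr F ^ i) = if rr F ^ i ∣ n then coeff (n / rr F ^ i) f ^ rr F ^ i else 0 := by
  obtain ⟨p, _, e, hp, he⟩ := FiniteField.card' F
  have : ExpChar F p := ExpChar.prime hp
  rw [rr, he, ← pow_mul]
  exact coeff_pow_expChar_pow p f (e * i) n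

lemma br_zero : br F 0 = 0 := by simp [br]

lemma br_ne_zero {i : ℕ} (hi : i ≠ 0) : br F i ≠ 0 := by
  rw [br, Tv, ← RatFunc.algebraMap_X, ← map_pow, ← map_sub]
  exact RatFunc.algebraMap_ne_zero (FiniteField.X_pow_card_pow_sub_X_ne_zero F hi (one_lt_rr F))

lemma br_add (i j : ℕ) : br F (i + j) = br F i + br F j ^ rr F ^ i := by
  obtain ⟨φ, hφ⟩ := exists_ringHom_eq_pow_rr_pow F i
  rw [br, br, br, ← hφ (_ - _), map_sub, hφ, hφ, ← pow_mul, ← pow_add, add_comm j i]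
  ring

lemma D_ne_zero (i : ℕ) : D F i ≠ 0 := by
  induction i with
  | zero => exact one_ne_zero
  | succ i ih => exact mul_ne_zero (br_ne_zero F i.succ_ne_zero) (pow_ne_zero _ ih)

lemma L_ne_zero (i : ℕ) : L F i ≠ 0 := by
  induction i with
  | zero => exact one_ne_zero
  | succ i ih => exact mul_ne_zero (br_ne_zero F i.succ_ne_zero) ih

lemma Cf_ne_zero (n : ℕ) : Cf F n ≠ 0 :=
  prod_ne_zero_iff.2 fun j _ => pow_ne_zero _ (D_ne_zero F j)

lemma coeff_logC_rr_pow (k : ℕ) : coeff (rr F ^ k) (logC F) = (-1) ^ k / L F k := by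
  rw [logC, coeff_mk, sum_eq_single_of_mem k
    (mem_range.2 (Nat.lt_succ_of_lt (Nat.lt_pow_self (one_lt_rr F))))]
  · exact if_pos rfl
  · exact fun i _ hik => if_neg fun h => hik (Nat.pow_right_injective (one_lt_rr F) h).symm

lemma coeff_logC_eq_zero {n : ℕ} (hn : ∀ k, n ≠ rr F ^ k) : coeff n (logC F) = 0 := by
  rw [logC, coeff_mk]
  exact sum_eq_zero fun k _ => if_neg (hn k)

lemma constantCoeff_logC : constantCoeff (logC F) = 0 := by
  rw [← coeff_zero_eq_constantCoeff_apply]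
  exact coeff_logC_eq_zero F fun k => (pow_pos (rr_pos F) k).ne

/-- The coefficient of `z ^ r ^ m` in `e_C (log_C z)`. -/
def expLogCoeff (m : ℕ) : K F :=
  ∑ p ∈ antidiagonal m, ((-1) ^ p.2 / L F p.2) ^ rr F ^ p.1 / D F p.1

/-- Splitting `[m + 1] = [i] + [k] ^ r ^ i` along `i + k = m + 1` turns the two halves into
`expLogCoeff m ^ r` and `-expLogCoeff m`. -/
lemma br_mul_expLogCoeff_succ (m : ℕ) :
    br F (m + 1) * expLogCoeff F (m + 1) = expLogCoeff F m ^ rr F - expLogCoeff F m := by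
  have hsplit : br F (m + 1) * expLogCoeff F (m + 1) =
      ∑ p ∈ antidiagonal (m + 1), br F p.1 * (((-1) ^ p.2 / L F p.2) ^ rr F ^ p.1 / D F p.1) +
      ∑ p ∈ antidiagonal (m + 1),
        (br F p.2 * ((-1) ^ p.2 / L F p.2)) ^ rr F ^ p.1 / D F p.1 := by
    rw [expLogCoeff, mul_sum, ← sum_add_distrib]
    refine sum_congr rfl fun p hp => ?_
    rw [← mem_antidiagonal.1 hp, br_add, mul_pow]
    ring
  obtain ⟨φ, hφ⟩ := exists_ringHom_eq_pow_rr_pow F 1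
  have hfrob : ∑ p ∈ antidiagonal m, br F (p.1 + 1) *
      (((-1) ^ p.2 / L F p.2) ^ rr F ^ (p.1 + 1) / D F (p.1 + 1)) = expLogCoeff F m ^ rr F := by
    rw [← pow_one (rr F), ← hφ, expLogCoeff, map_sum]
    refine sum_congr rfl fun p _ => ?_
    rw [hφ, pow_one, D, mul_div_assoc', mul_div_mul_left _ _ (br_ne_zero F p.1.succ_ne_zero)]
    ring
  have hneg : ∑ p ∈ antidiagonal m,
      (br F (p.2 + 1) * ((-1) ^ (p.2 + 1) / L F (p.2 + 1))) ^ rr F ^ p.1 / D F p.1 =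
      -expLogCoeff F m := by
    rw [expLogCoeff, ← sum_neg_distrib]
    refine sum_congr rfl fun p _ => ?_
    obtain ⟨ψ, hψ⟩ := exists_ringHom_eq_pow_rr_pow F p.1
    rw [L, pow_succ, mul_div_assoc', mul_div_mul_left _ _ (br_ne_zero F p.2.succ_ne_zero),
      mul_neg_one, neg_div, ← hψ, ← hψ, map_neg, neg_div]
  rw [hsplit, Finset.Nat.sum_antidiagonal_succ, Finset.Nat.sum_antidiagonal_succ', hfrob, hneg]
  simp [br_zero, sub_eq_add_neg, (rr_pos F).ne']

lemma expLogCoeff_zero : expLogCoeff F 0 = 1 := by simp [expLogCoeff, L, D]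

lemma expLogCoeff_succ (m : ℕ) : expLogCoeff F (m + 1) = 0 := by
  have hnext : ∀ m, expLogCoeff F m ^ rr F - expLogCoeff F m = 0 → expLogCoeff F (m + 1) = 0 :=
    fun m h => (mul_eq_zero.1 ((br_mul_expLogCoeff_succ F m).trans h)).resolve_left
      (br_ne_zero F m.succ_ne_zero)
  induction m with
  | zero => exact hnext 0 (by rw [expLogCoeff_zero, one_pow, sub_self])
  | succ m ih => exact hnext _ (by rw [ih, zero_pow (rr_pos F).ne', sub_self])

lemma sum_range_coeff_eC_mul (N : ℕ) (g : ℕ → K F) :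
    ∑ d ∈ range (N + 1), coeff d (eC F) * g d =
      ∑ i ∈ range (N + 1) with rr F ^ i ≤ N, g (rr F ^ i) / D F i := by
  have hcoeff : ∀ d ∈ range (N + 1),
      coeff d (eC F) = ∑ i ∈ range (N + 1), if d = rr F ^ i then 1 / D F i else 0 := by
    intro d hd
    rw [eC, coeff_mk]
    refine sum_subset (range_subset_range.2 (by simpa using hd)) fun i _ hid => if_neg ?_
    have := Nat.lt_pow_self (one_lt_rr F) (n := i)
    rw [mem_range] at hid
    omega
  rw [sum_congr rfl fun d hd => by rw [hcoeff d hd, sum_mul], sum_comm, sum_filter]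
  refine sum_congr rfl fun i _ => ?_
  simp only [ite_mul, zero_mul, sum_ite_eq', mem_range, Nat.lt_succ_iff, one_div_mul_eq_div]

lemma coeff_rr_pow_logC_pow_rr_pow {i m : ℕ} (h : i ≤ m) :
    coeff (rr F ^ m) (logC F ^ rr F ^ i) = ((-1) ^ (m - i) / L F (m - i)) ^ rr F ^ i := by
  rw [coeff_pow_rr_pow, if_pos (pow_dvd_pow _ h), Nat.pow_div h (rr_pos F), coeff_logC_rr_pow]

lemma coeff_logC_pow_rr_pow_eq_zero {n : ℕ} (hn : ∀ m, n ≠ rr F ^ m) (i : ℕ) :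
    coeff n (logC F ^ rr F ^ i) = 0 := by
  rw [coeff_pow_rr_pow]
  split_ifs with hdvd
  · rw [coeff_logC_eq_zero F fun k hk =>
        hn (i + k) (by rw [pow_add, ← hk, Nat.mul_div_cancel' hdvd]),
      zero_pow (pow_ne_zero _ (rr_pos F).ne')]
  · rfl

theorem subst_logC_eC : (eC F).subst (logC F) = X := by
  have hr := one_lt_rr F
  ext N
  rw [coeff_subst_eq_sum_range (constantCoeff_logC F), sum_range_coeff_eC_mul, coeff_X]
  by_cases hN : ∃ m, N = rr F ^ m
  · obtain ⟨m, rfl⟩ := hN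
    have hfilter : {i ∈ range (rr F ^ m + 1) | rr F ^ i ≤ rr F ^ m} = range (m + 1) := by
      ext i
      simp only [mem_filter, mem_range, Nat.pow_le_pow_iff_right hr]
      have := Nat.lt_pow_self hr (n := m)
      omega
    have hsum : ∑ i ∈ range (m + 1), coeff (rr F ^ m) (logC F ^ rr F ^ i) / D F i =
        expLogCoeff F m := by
      rw [expLogCoeff, Finset.Nat.sum_antidiagonal_eq_sum_range_succ
        (fun i k => ((-1) ^ k / L F k) ^ rr F ^ i / D F i)]
      exact sum_congr rfl fun i hi => by
        rw [coeff_rr_pow_logC_pow_rr_pow F (Nat.lt_succ_iff.1 (mem_range.1 hi))]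
    rw [hfilter, hsum]
    cases m with
    | zero => rw [expLogCoeff_zero, pow_zero, if_pos rfl]
    | succ m => rw [expLogCoeff_succ, if_neg (Nat.one_lt_pow m.succ_ne_zero hr).ne']
  · push Not at hN
    rw [if_neg (by simpa using hN 0)]
    exact sum_eq_zero fun i _ => by rw [coeff_logC_pow_rr_pow_eq_zero F hN, zero_div]

lemma constantCoeff_eC : constantCoeff (eC F) = 0 := by
  rw [← coeff_zero_eq_constantCoeff_apply, eC, coeff_mk]
  exact sum_eq_zero fun i _ => if_neg (pow_pos (rr_pos F) i).ne

lemma X_mul_eCdivZ : X * eCdivZ F = eC F :=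
  X_mul_shift_of_constantCoeff_eq_zero (constantCoeff_eC F)

lemma X_mul_logCdivZ : X * logCdivZ F = logC F :=
  X_mul_shift_of_constantCoeff_eq_zero (constantCoeff_logC F)

lemma hasSubst_logC : HasSubst (logC F) := HasSubst.of_constantCoeff_zero' (constantCoeff_logC F)

lemma logCdivZ_mul_subst_logC_eCdivZ : logCdivZ F * (eCdivZ F).subst (logC F) = 1 := by
  refine mul_left_cancel₀ (X_ne_zero (R := K F)) ?_
  calc X * (logCdivZ F * (eCdivZ F).subst (logC F))
      = (X : (K F)⟦X⟧).subst (logC F) * (eCdivZ F).subst (logC F) := by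
        rw [← mul_assoc, X_mul_logCdivZ, subst_X (hasSubst_logC F)]
    _ = X * 1 := by rw [← subst_mul (hasSubst_logC F), X_mul_eCdivZ, subst_logC_eC, mul_one]

lemma subst_logC_eq_logCdivZ_of_mul_eCdivZ_eq_one {B : (K F)⟦X⟧} (hB : B * eCdivZ F = 1) :
    B.subst (logC F) = logCdivZ F := by
  refine left_inv_eq_right_inv ?_ (mul_comm (logCdivZ F) _ ▸ logCdivZ_mul_subst_logC_eCdivZ F)
  rw [← coe_substAlgHom (hasSubst_logC F), ← map_mul, hB, map_one]

lemma sum_coeff_mul_coeff_logC_pow {B : (K F)⟦X⟧} (hB : B * eCdivZ F = 1) (j : ℕ) :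
    ∑ l ∈ range (rr F ^ j - 1 + 1), coeff l B * coeff (rr F ^ j - 1) (logC F ^ l) =
      (-1) ^ j / L F j := by
  rw [← coeff_subst_eq_sum_range (constantCoeff_logC F),
    subst_logC_eq_logCdivZ_of_mul_eCdivZ_eq_one F hB, logCdivZ, coeff_mk,
    Nat.sub_add_cancel (Nat.one_le_pow _ _ (rr_pos F)), coeff_logC_rr_pow]

lemma coeff_subst_logC_eCdivZ (n : ℕ) :
    coeff n ((eCdivZ F).subst (logC F)) =
      ∑ j ∈ range (n + 1) with rr F ^ j - 1 ≤ n, coeff n (logC F ^ (rr F ^ j - 1)) / D F j := by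
  have hshift : ∑ d ∈ range (n + 1), coeff d (eCdivZ F) * coeff n (logC F ^ d) =
      ∑ d ∈ range (n + 1 + 1), coeff d (eC F) * coeff n (logC F ^ (d - 1)) := by
    rw [sum_range_succ' _ (n + 1), coeff_zero_eq_constantCoeff_apply, constantCoeff_eC, zero_mul,
      add_zero]
    simp only [eCdivZ, coeff_mk, Nat.add_sub_cancel]
  have hfilter : {i ∈ range (n + 1 + 1) | rr F ^ i ≤ n + 1} =
      {j ∈ range (n + 1) | rr F ^ j - 1 ≤ n} := by
    ext i
    have := Nat.lt_pow_self (one_lt_rr F) (n := i)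
    simp only [mem_filter, mem_range]
    omega
  rw [coeff_subst_eq_sum_range (constantCoeff_logC F), hshift, sum_range_coeff_eC_mul, hfilter]

lemma Cf_rr_pow_sub_one (j : ℕ) : Cf F (rr F ^ j - 1) = ∏ t ∈ range j, D F t ^ (rr F - 1) := by
  simp_rw [Cf, Nat.pow_sub_one_div_pow_mod (rr_pos F), pow_ite, pow_zero]
  rw [← prod_filter]
  congr 1
  ext t
  have := Nat.lt_pow_self (one_lt_rr F) (n := j)
  simp only [mem_filter, mem_range]
  omega

lemma D_eq_Cf_mul_L (j : ℕ) : D F j = Cf F (rr F ^ j - 1) * L F j := by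
  induction j with
  | zero => rw [Cf_rr_pow_sub_one, prod_range_zero, one_mul]; rfl
  | succ j ih =>
    rw [D, L, Cf_rr_pow_sub_one, prod_range_succ, ← Cf_rr_pow_sub_one,
      ← pow_sub_one_mul (rr_pos F).ne' (D F j), ih]
    ring

/-- Theorem: `CC_n = Σ_{j ≥ 0, r^j - 1 ≤ n} Σ_{l=0}^{r^j - 1}
((-1)^j / Π(r^j - 1)) · S1_C(n, r^j - 1) · S1_C(r^j - 1, l) · BC_l`.
(Any `j` with `r^j - 1 ≤ n` satisfies `j ≤ n` since `r ≥ 2`.) -/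
theorem cauchyCarlitz_eq_double_sum
    (BC CC : ℕ → K F) (S1C : ℕ → ℕ → K F)
    (hBC : (PowerSeries.mk fun n => BC n / Cf F n) * eCdivZ F = 1)
    (hCC : (PowerSeries.mk fun n => CC n / Cf F n) * logCdivZ F = 1)
    (hS1C : ∀ n k : ℕ,
      PowerSeries.coeff (R := K F) n (logC F ^ k) / Cf F k = S1C n k / Cf F n)
    (n : ℕ) :
    CC n = ∑ j ∈ (Finset.range (n + 1)).filter (fun j => (rr F) ^ j - 1 ≤ n),
      ∑ l ∈ Finset.range ((rr F) ^ j - 1 + 1),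
        ((-1 : K F) ^ j / Cf F ((rr F) ^ j - 1)) *
          S1C n ((rr F) ^ j - 1) * S1C ((rr F) ^ j - 1) l * BC l := by
  have hS1C' : ∀ a b, S1C a b = Cf F a * (coeff a (logC F ^ b) / Cf F b) := fun a b => by
    rw [hS1C, mul_div_cancel₀ _ (Cf_ne_zero F a)]
  have hCC' : CC n = Cf F n *
      ∑ j ∈ range (n + 1) with rr F ^ j - 1 ≤ n, coeff n (logC F ^ (rr F ^ j - 1)) / D F j := by
    have h := congrArg (coeff n) (left_inv_eq_right_inv hCC (logCdivZ_mul_subst_logC_eCdivZ F))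
    rw [coeff_mk, coeff_subst_logC_eCdivZ] at h
    rw [← h, mul_div_cancel₀ _ (Cf_ne_zero F n)]
  have hinner : ∀ j, ∑ l ∈ range (rr F ^ j - 1 + 1), S1C (rr F ^ j - 1) l * BC l =
      Cf F (rr F ^ j - 1) * ((-1) ^ j / L F j) := fun j => by
    rw [← sum_coeff_mul_coeff_logC_pow F hBC j, mul_sum]
    refine sum_congr rfl fun l _ => ?_
    rw [hS1C', coeff_mk]
    ring
  rw [hCC', mul_sum]
  refine sum_congr rfl fun j _ => ?_
  simp_rw [mul_assoc, ← mul_sum]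
  rw [hinner, hS1C', D_eq_Cf_mul_L]
  have hsign : ((-1 : K F) ^ j) ^ 2 = 1 := by rw [← pow_mul, mul_comm, pow_mul, neg_one_sq, one_pow]
  field_simp [Cf_ne_zero, L_ne_zero]
  linear_combination -coeff n (logC F ^ (rr F ^ j - 1)) * hsign
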